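/- Let m ≥ 2, d ≥ 1 be integers, 1 ≤ α ≤ m, let σ be a finite nonnegative Borel measure on ℝ^{md} supported in the closed unit ball, and let φ be a Schwartz function on ℝ^d; set P_{<k}f = f ∗ φ_{2^{−k}} with φ_δ(z) = δ^{−d}φ(z/δ). Then there is a constant C depending only on d, m, φ such that for all Schwartz functions f₁,…,f_m on ℝ^d, all k ∈ ℤ and all x ∈ ℝ^d, sup_{1<t<2} |∫_{ℝ^{md}} (∏_{μ=1}^α P_{<k}f_μ(x − 2^{−k}t y_μ)) (∏_{ν=α+1}^m f_ν(x − 2^{−k}t y_ν)) dσ(y)| ≤ C·(∏_{μ=1}^α M_HL f_μ(x))·sup_{k'∈ℤ} sup_{1<t<2} ∫_{ℝ^{md}} ∏_{ν=α+1}^m |f_ν(x − 2^{−k'}t y_ν)| dσ(y). -/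

import Mathlib

open MeasureTheory Metric Filter Complex SchwartzMap
open scoped ENNReal NNReal RealInnerProductSpace FourierTransform BigOperators

noncomputable section

/-- The `i`-th `ℝ^d`-block of a point of `ℝ^{md} = (ℝ^d)^m`. -/
def blk {m d : ℕ} (y : EuclideanSpace ℝ (Fin m × Fin d)) (i : Fin m) :
    EuclideanSpace ℝ (Fin d) := WithLp.toLp 2 (fun a => y (i, a))

/-- Fourier transform of a measure: `σ̂(ξ) = ∫ e^{−2πi y·ξ} dσ(y)`. -/
def measFT {ι : Type*} [Fintype ι] (σ : Measure (EuclideanSpace ℝ ι))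
    (ξ : EuclideanSpace ℝ ι) : ℂ :=
  ∫ y, Complex.exp ((-2 : ℂ) * (Real.pi : ℂ) * Complex.I * ((⟪y, ξ⟫ : ℝ) : ℂ)) ∂σ

/-- The multilinear average `A_σ(F)(x,t) = ∫ ∏ f_i(x − t y_i) dσ(y)`. -/
def mAvg {m d : ℕ} (σ : Measure (EuclideanSpace ℝ (Fin m × Fin d)))
    (f : Fin m → (EuclideanSpace ℝ (Fin d) → ℂ))
    (x : EuclideanSpace ℝ (Fin d)) (t : ℝ) : ℂ :=
  ∫ y, (∏ i, f i (x - t • blk y i)) ∂σ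

/-- The local maximal operator `M_σ^{loc}(F)(x) = sup_{1<t<2} |A_σ(F)(x,t)|`. -/
def mMaxLoc {m d : ℕ} (σ : Measure (EuclideanSpace ℝ (Fin m × Fin d)))
    (f : Fin m → (EuclideanSpace ℝ (Fin d) → ℂ))
    (x : EuclideanSpace ℝ (Fin d)) : ℝ≥0∞ :=
  ⨆ (t : ℝ) (_ : t ∈ Set.Ioo (1 : ℝ) 2), (‖mAvg σ f x t‖₊ : ℝ≥0∞)

/-- The centered Hardy–Littlewood maximal function (with values in `ℝ≥0∞`). -/
def MHL {d : ℕ} (f : EuclideanSpace ℝ (Fin d) → ℂ)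
    (x : EuclideanSpace ℝ (Fin d)) : ℝ≥0∞ :=
  ⨆ (r : ℝ) (_ : 0 < r),
    (volume (Metric.ball x r))⁻¹ * ∫⁻ y in Metric.ball x r, (‖f y‖₊ : ℝ≥0∞)

/-- The low-pass piece `P_{<k} f = f ∗ φ_{2^{−k}}`. -/
def lowPass {d : ℕ} (φ : EuclideanSpace ℝ (Fin d) → ℂ) (k : ℤ)
    (f : EuclideanSpace ℝ (Fin d) → ℂ) (x : EuclideanSpace ℝ (Fin d)) : ℂ :=
  ∫ z, f z * ((((2 : ℝ) ^ (k * (d : ℤ)) : ℝ) : ℂ) * φ ((2 : ℝ) ^ k • (x - z)))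

lemma mhl_key {d : ℕ} (f : EuclideanSpace ℝ (Fin d) → ℂ)
    (x : EuclideanSpace ℝ (Fin d)) {R : ℝ} (hR : 0 < R) :
    ∫⁻ z in ball x R, (‖f z‖₊ : ℝ≥0∞) ∂volume ≤ volume (ball x R) * MHL f x := by
  have h1 : (volume (ball x R))⁻¹ * ∫⁻ z in ball x R, (‖f z‖₊ : ℝ≥0∞) ∂volume ≤ MHL f x :=
    le_iSup₂ (f := fun r (_ : 0 < r) =>
      (volume (ball x r))⁻¹ * ∫⁻ z in ball x r, (‖f z‖₊ : ℝ≥0∞) ∂volume) R hR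
  have h0 : volume (ball x R) ≠ 0 := (measure_ball_pos volume x hR).ne'
  have htop : volume (ball x R) ≠ ∞ := measure_ball_lt_top.ne
  calc ∫⁻ z in ball x R, (‖f z‖₊ : ℝ≥0∞) ∂volume
      = (volume (ball x R) * (volume (ball x R))⁻¹) *
          ∫⁻ z in ball x R, (‖f z‖₊ : ℝ≥0∞) ∂volume := by
        rw [ENNReal.mul_inv_cancel h0 htop, one_mul]
    _ = volume (ball x R) * ((volume (ball x R))⁻¹ *
          ∫⁻ z in ball x R, (‖f z‖₊ : ℝ≥0∞) ∂volume) := mul_assoc _ _ _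
    _ ≤ _ := mul_le_mul_right h1 _

lemma lowPass_bound (d : ℕ) (hd : 1 ≤ d) (φ : SchwartzMap (EuclideanSpace ℝ (Fin d)) ℂ) :
    ∃ C : ℝ, 1 ≤ C ∧ ∀ (f : SchwartzMap (EuclideanSpace ℝ (Fin d)) ℂ) (k : ℤ)
      (x w : EuclideanSpace ℝ (Fin d)), dist w x ≤ 2 * (2 : ℝ) ^ (-k) →
      (‖lowPass (⇑φ) k (⇑f) w‖₊ : ℝ≥0∞) ≤ ENNReal.ofReal C * MHL (⇑f) x := by
  haveI : Nonempty (Fin d) := Fin.pos_iff_nonempty.mp hd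
  obtain ⟨C0, hC0pos, hC0⟩ := φ.decay 0 0
  obtain ⟨C1, hC1pos, hC1⟩ := φ.decay (d + 1) 0
  have hC0' : ∀ v, ‖φ v‖ ≤ C0 := fun v => by simpa [norm_iteratedFDeriv_zero] using hC0 v
  have hC1' : ∀ v, ‖v‖ ^ (d + 1) * ‖φ v‖ ≤ C1 := fun v => by
    simpa [norm_iteratedFDeriv_zero] using hC1 v
  set D2 : ℝ := max C0 (C1 * 2 ^ (d + 1)) with hD2
  have hD2pos : 0 < D2 := lt_of_lt_of_le hC0pos (le_max_left _ _)
  set V : ℝ≥0∞ := volume (ball (0 : EuclideanSpace ℝ (Fin d)) 1) with hV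
  have hVne : V ≠ ∞ := measure_ball_lt_top.ne
  refine ⟨max 1 (2 * (D2 * 4 ^ d) * V.toReal), le_max_left _ _, ?_⟩
  intro f k x w hw
  set δ : ℝ := (2 : ℝ) ^ (-k) with hδdef
  have hδpos : 0 < δ := zpow_pos (by norm_num) _
  -- annuli
  set A : ℕ → Set (EuclideanSpace ℝ (Fin d)) := fun j =>
    Nat.casesOn j (closedBall w δ)
      (fun j' => closedBall w (2 ^ (j' + 1) * δ) \ closedBall w (2 ^ j' * δ)) with hA
  have hmeasA : ∀ j, MeasurableSet (A j) := by
    intro j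
    cases j with
    | zero => exact measurableSet_closedBall
    | succ j' => exact measurableSet_closedBall.diff measurableSet_closedBall
  have hsubA : ∀ j, A j ⊆ closedBall w (2 ^ j * δ) := by
    intro j
    cases j with
    | zero => simpa [hA] using subset_rfl
    | succ j' => exact Set.diff_subset
  have hcover : (⋃ j, A j) = Set.univ := by
    have hmono : ∀ j : ℕ, closedBall w (2 ^ j * δ) ⊆ ⋃ i, A i := by
      intro j
      induction j with
      | zero => intro z hz; exact Set.mem_iUnion.2 ⟨0, by simpa [hA] using hz⟩
      | succ j ih =>
        intro z hz
        by_cases h : z ∈ closedBall w (2 ^ j * δ)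
        · exact ih h
        · exact Set.mem_iUnion.2 ⟨j + 1, ⟨hz, h⟩⟩
    apply Set.eq_univ_of_forall
    intro z
    obtain ⟨n, hn⟩ := pow_unbounded_of_one_lt (dist z w / δ) (one_lt_two (α := ℝ))
    refine hmono n ?_
    rw [mem_closedBall]
    exact le_of_lt (by rwa [div_lt_iff₀ hδpos] at hn)
  -- pointwise decay bound on annuli
  set bd : ℕ → ℝ := fun j => D2 * ((1 : ℝ) / 2 ^ (d + 1)) ^ j with hbd
  have hbdnn : ∀ j, 0 ≤ bd j := fun j => by positivity
  have hφbd : ∀ j, ∀ z ∈ A j, ‖φ ((2 : ℝ) ^ k • (w - z))‖ ≤ bd j := by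
    intro j z hz
    cases j with
    | zero =>
      refine (hC0' _).trans ?_
      simp only [hbd, pow_zero, mul_one]
      exact le_max_left _ _
    | succ j' =>
      have hz2 : z ∉ closedBall w (2 ^ j' * δ) := hz.2
      have hdist : 2 ^ j' * δ < dist z w := by
        simpa [mem_closedBall, not_le] using hz2
      set v : EuclideanSpace ℝ (Fin d) := (2 : ℝ) ^ k • (w - z) with hv
      have hvnorm : ‖v‖ = (2 : ℝ) ^ k * dist z w := by
        rw [hv, norm_smul, Real.norm_eq_abs, abs_of_pos (zpow_pos (by norm_num : (0:ℝ) < 2) k),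
          ← dist_eq_norm, dist_comm]
      have h2j : (2 : ℝ) ^ j' ≤ ‖v‖ := by
        rw [hvnorm]
        have heq : (2 : ℝ) ^ j' = (2 : ℝ) ^ k * (2 ^ j' * δ) := by
          rw [hδdef, mul_comm ((2:ℝ) ^ j'), ← mul_assoc, ← zpow_add₀ (two_ne_zero (α := ℝ))]
          simp
        rw [heq]
        exact mul_le_mul_of_nonneg_left hdist.le (by positivity)
      have hBpos : (0 : ℝ) < ((2 : ℝ) ^ j') ^ (d + 1) := by positivity
      have hb : ((2 : ℝ) ^ j') ^ (d + 1) * ‖φ v‖ ≤ C1 := by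
        refine le_trans ?_ (hC1' v)
        exact mul_le_mul_of_nonneg_right (pow_le_pow_left₀ (by positivity) h2j _) (norm_nonneg _)
      have hφle : ‖φ v‖ ≤ C1 / ((2 : ℝ) ^ j') ^ (d + 1) := by
        rw [le_div_iff₀ hBpos, mul_comm]; exact hb
      refine hφle.trans ?_
      have e1 : ((2 : ℝ) ^ j') ^ (d + 1) = ((2 : ℝ) ^ (d + 1)) ^ j' := by
        rw [← pow_mul, ← pow_mul, mul_comm]
      have e2 : C1 / ((2 : ℝ) ^ j') ^ (d + 1)
          = (C1 * 2 ^ (d + 1)) * ((1 : ℝ) / 2 ^ (d + 1)) ^ (j' + 1) := by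
        rw [e1, one_div, inv_pow, div_eq_mul_inv, pow_succ]
        have h2d : ((2 : ℝ) ^ (d + 1)) ≠ 0 := by positivity
        field_simp
        ring
      rw [e2, hbd]
      exact mul_le_mul_of_nonneg_right (le_max_right _ _) (by positivity)
  -- set up the integral
  set K : ℝ≥0∞ := ENNReal.ofReal ((2 : ℝ) ^ (k * (d : ℤ))) with hK
  set F : EuclideanSpace ℝ (Fin d) → ℝ≥0∞ := fun z =>
    (‖f z‖₊ : ℝ≥0∞) * (K * (‖φ ((2 : ℝ) ^ k • (w - z))‖₊ : ℝ≥0∞)) with hF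
  have h1 : (‖lowPass (⇑φ) k (⇑f) w‖₊ : ℝ≥0∞) ≤ ∫⁻ z, F z ∂volume := by
    refine le_trans (enorm_integral_le_lintegral_enorm _)
      (le_of_eq (lintegral_congr fun z => ?_))
    rw [hF, enorm_eq_nnnorm, nnnorm_mul, nnnorm_mul, ENNReal.coe_mul, ENNReal.coe_mul,
      Complex.nnnorm_real, ← enorm_eq_nnnorm (2 ^ (k * (d:ℤ)) : ℝ), Real.enorm_eq_ofReal (by positivity), hK]
  have h3 : ∫⁻ z, F z ∂volume ≤ ∑' j, ∫⁻ z in A j, F z ∂volume := by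
    rw [← setLIntegral_univ F, ← hcover]
    exact lintegral_iUnion_le A F
  have h4 : ∀ j, ∫⁻ z in A j, F z ∂volume
      ≤ ((2 : ℝ≥0∞)⁻¹) ^ j * (ENNReal.ofReal (D2 * 4 ^ d) * (V * MHL (⇑f) x)) := by
    intro j
    have step1 : ∫⁻ z in A j, F z ∂volume
        ≤ ∫⁻ z in A j, (K * ENNReal.ofReal (bd j)) * (‖f z‖₊ : ℝ≥0∞) ∂volume := by
      refine setLIntegral_mono' (hmeasA j) fun z hz => ?_
      rw [hF]
      have hb : (‖φ ((2 : ℝ) ^ k • (w - z))‖₊ : ℝ≥0∞) ≤ ENNReal.ofReal (bd j) := by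
        rw [← enorm_eq_nnnorm, ← ofReal_norm]
        exact ENNReal.ofReal_le_ofReal (hφbd j z hz)
      calc (‖f z‖₊ : ℝ≥0∞) * (K * (‖φ ((2 : ℝ) ^ k • (w - z))‖₊ : ℝ≥0∞))
          ≤ (‖f z‖₊ : ℝ≥0∞) * (K * ENNReal.ofReal (bd j)) :=
            mul_le_mul_right (mul_le_mul_right hb K) _
        _ = (K * ENNReal.ofReal (bd j)) * (‖f z‖₊ : ℝ≥0∞) := mul_comm _ _
    have step2 : ∫⁻ z in A j, (K * ENNReal.ofReal (bd j)) * (‖f z‖₊ : ℝ≥0∞) ∂volume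
        = (K * ENNReal.ofReal (bd j)) * ∫⁻ z in A j, (‖f z‖₊ : ℝ≥0∞) ∂volume :=
      lintegral_const_mul' _ _ (ENNReal.mul_ne_top ENNReal.ofReal_ne_top ENNReal.ofReal_ne_top)
    have hRpos : (0 : ℝ) < (2 ^ j + 3) * δ := by positivity
    have hsubball : A j ⊆ ball x ((2 ^ j + 3) * δ) := by
      intro z hz
      have hzw : dist z w ≤ 2 ^ j * δ := hsubA j hz
      have : dist z x < (2 ^ j + 3) * δ :=
        lt_of_le_of_lt (dist_triangle z w x) (by nlinarith)
      exact mem_ball.2 this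
    have step3 : ∫⁻ z in A j, (‖f z‖₊ : ℝ≥0∞) ∂volume
        ≤ ∫⁻ z in ball x ((2 ^ j + 3) * δ), (‖f z‖₊ : ℝ≥0∞) ∂volume :=
      lintegral_mono_set hsubball
    have step4 := mhl_key (⇑f) x hRpos
    have hball : volume (ball x ((2 ^ j + 3) * δ))
        = ENNReal.ofReal (((2 ^ j + 3) * δ) ^ d) * V := by
      rw [hV, Measure.addHaar_ball volume x hRpos.le, finrank_euclideanSpace_fin]
    have hδd : (2 : ℝ) ^ (k * (d : ℤ)) * δ ^ d = 1 := by
      rw [hδdef, ← zpow_natCast ((2 : ℝ) ^ (-k)) d, ← zpow_mul,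
        ← zpow_add₀ (two_ne_zero (α := ℝ))]
      norm_num
    have h2j1 : (1 : ℝ) ≤ 2 ^ j := by exact_mod_cast Nat.one_le_two_pow (n := j)
    have hgeo : bd j * (2 ^ j + 3) ^ d ≤ (1 / 2 : ℝ) ^ j * (D2 * 4 ^ d) := by
      have hstep : (2 ^ j + 3 : ℝ) ^ d ≤ (4 * 2 ^ j) ^ d :=
        pow_le_pow_left₀ (by positivity) (by nlinarith) d
      have e2 : ((1 : ℝ) / 2 ^ (d + 1)) ^ j * (2 ^ j) ^ d = (1 / 2 : ℝ) ^ j := by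
        rw [← pow_mul, mul_comm j d, pow_mul, ← mul_pow]
        congr 1
        rw [pow_succ]
        field_simp
      calc bd j * (2 ^ j + 3) ^ d ≤ bd j * (4 * 2 ^ j) ^ d :=
            mul_le_mul_of_nonneg_left hstep (hbdnn j)
        _ = (1 / 2 : ℝ) ^ j * (D2 * 4 ^ d) := by
            rw [hbd, mul_pow]
            linear_combination (D2 * (4:ℝ) ^ d) * e2
    have hconst : K * ENNReal.ofReal (bd j) * ENNReal.ofReal (((2 ^ j + 3) * δ) ^ d)
        ≤ ((2 : ℝ≥0∞)⁻¹) ^ j * ENNReal.ofReal (D2 * 4 ^ d) := by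
      rw [hK, ← ENNReal.ofReal_mul (by positivity), ← ENNReal.ofReal_mul (by positivity)]
      have hrhs : ((2 : ℝ≥0∞)⁻¹) ^ j * ENNReal.ofReal (D2 * 4 ^ d)
          = ENNReal.ofReal ((1 / 2 : ℝ) ^ j * (D2 * 4 ^ d)) := by
        rw [ENNReal.ofReal_mul (by positivity : (0:ℝ) ≤ (1 / 2 : ℝ) ^ j)]
        congr 1
        rw [ENNReal.ofReal_pow (by norm_num : (0:ℝ) ≤ (1 / 2 : ℝ))]
        congr 1
        rw [one_div, ENNReal.ofReal_inv_of_pos (by norm_num : (0:ℝ) < 2)]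
        norm_num
      rw [hrhs]
      refine ENNReal.ofReal_le_ofReal ?_
      have hlhs : (2 : ℝ) ^ (k * (d : ℤ)) * bd j * ((2 ^ j + 3) * δ) ^ d
          = bd j * (2 ^ j + 3) ^ d := by
        rw [mul_pow]
        linear_combination (bd j * ((2:ℝ) ^ j + 3) ^ d) * hδd
      rw [hlhs]
      exact hgeo
    calc ∫⁻ z in A j, F z ∂volume
        ≤ (K * ENNReal.ofReal (bd j)) * ∫⁻ z in A j, (‖f z‖₊ : ℝ≥0∞) ∂volume :=
          step1.trans (le_of_eq step2)
      _ ≤ (K * ENNReal.ofReal (bd j)) * (volume (ball x ((2 ^ j + 3) * δ)) * MHL (⇑f) x) :=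
          mul_le_mul_right (step3.trans step4) _
      _ = (K * ENNReal.ofReal (bd j) * ENNReal.ofReal (((2 ^ j + 3) * δ) ^ d)) *
            (V * MHL (⇑f) x) := by rw [hball]; ring
      _ ≤ (((2 : ℝ≥0∞)⁻¹) ^ j * ENNReal.ofReal (D2 * 4 ^ d)) * (V * MHL (⇑f) x) :=
          mul_le_mul_left hconst _
      _ = ((2 : ℝ≥0∞)⁻¹) ^ j * (ENNReal.ofReal (D2 * 4 ^ d) * (V * MHL (⇑f) x)) :=
          mul_assoc _ _ _
  have h5 : ∑' j, ∫⁻ z in A j, F z ∂volume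
      ≤ 2 * (ENNReal.ofReal (D2 * 4 ^ d) * (V * MHL (⇑f) x)) := by
    refine le_trans (ENNReal.tsum_le_tsum h4) ?_
    rw [ENNReal.tsum_mul_right, ENNReal.tsum_geometric, ENNReal.one_sub_inv_two, inv_inv]
  have h6 : 2 * (ENNReal.ofReal (D2 * 4 ^ d) * (V * MHL (⇑f) x))
      ≤ ENNReal.ofReal (max 1 (2 * (D2 * 4 ^ d) * V.toReal)) * MHL (⇑f) x := by
    have hVr : V = ENNReal.ofReal V.toReal := (ENNReal.ofReal_toReal hVne).symm
    calc 2 * (ENNReal.ofReal (D2 * 4 ^ d) * (V * MHL (⇑f) x))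
        = (2 * ENNReal.ofReal (D2 * 4 ^ d) * V) * MHL (⇑f) x := by ring
      _ = ENNReal.ofReal (2 * (D2 * 4 ^ d) * V.toReal) * MHL (⇑f) x := by
          have he : ENNReal.ofReal (2 * (D2 * 4 ^ d) * V.toReal)
              = 2 * ENNReal.ofReal (D2 * 4 ^ d) * V := by
            rw [ENNReal.ofReal_mul (by positivity : (0:ℝ) ≤ 2 * (D2 * 4 ^ d)),
              ENNReal.ofReal_mul (by norm_num : (0:ℝ) ≤ 2), ENNReal.ofReal_ofNat,
              ENNReal.ofReal_toReal hVne]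
          rw [he]
      _ ≤ ENNReal.ofReal (max 1 (2 * (D2 * 4 ^ d) * V.toReal)) * MHL (⇑f) x :=
          mul_le_mul_left (ENNReal.ofReal_le_ofReal (le_max_right _ _)) _
  exact h1.trans (h3.trans (h5.trans h6))

lemma norm_blk_le {m d : ℕ} (y : EuclideanSpace ℝ (Fin m × Fin d)) (i : Fin m) :
    ‖blk y i‖ ≤ ‖y‖ := by
  rw [EuclideanSpace.norm_eq, EuclideanSpace.norm_eq]
  apply Real.sqrt_le_sqrt
  have : (∑ a : Fin d, ‖blk y i a‖ ^ 2) = ∑ a : Fin d, ‖y (i, a)‖ ^ 2 := rfl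
  rw [this, Fintype.sum_prod_type]
  exact Finset.single_le_sum (f := fun i' => ∑ a : Fin d, ‖y (i', a)‖ ^ 2)
    (fun i' _ => Finset.sum_nonneg fun a _ => sq_nonneg _) (Finset.mem_univ i)

/-- Lemma 4.3 of the paper, first assertion. -/
theorem mixed_lowpass_maximal_bound (m d : ℕ) (hm : 2 ≤ m) (hd : 1 ≤ d)
    (α : ℕ) (hα1 : 1 ≤ α) (hα2 : α ≤ m)
    (σ : Measure (EuclideanSpace ℝ (Fin m × Fin d))) [IsFiniteMeasure σ]
    (hsupp : σ (Metric.closedBall 0 1)ᶜ = 0)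
    (φ : SchwartzMap (EuclideanSpace ℝ (Fin d)) ℂ) :
    ∃ C : ℝ, 0 < C ∧
      ∀ f : Fin m → SchwartzMap (EuclideanSpace ℝ (Fin d)) ℂ,
        ∀ (k : ℤ) (x : EuclideanSpace ℝ (Fin d)),
          (⨆ (t : ℝ) (_ : t ∈ Set.Ioo (1 : ℝ) 2),
              (‖∫ y, ∏ i : Fin m,
                  (if (i : ℕ) < α then
                    lowPass (⇑φ) k (⇑(f i)) (x - ((2 : ℝ) ^ (-k) * t) • blk y i)
                  else
                    f i (x - ((2 : ℝ) ^ (-k) * t) • blk y i)) ∂σ‖₊ : ℝ≥0∞))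
            ≤ ENNReal.ofReal C *
              (∏ i ∈ Finset.univ.filter (fun i : Fin m => (i : ℕ) < α),
                MHL (⇑(f i)) x) *
              (⨆ (k' : ℤ) (t : ℝ) (_ : t ∈ Set.Ioo (1 : ℝ) 2),
                ∫⁻ y, ∏ i ∈ Finset.univ.filter (fun i : Fin m => α ≤ (i : ℕ)),
                  (‖f i (x - ((2 : ℝ) ^ (-k') * t) • blk y i)‖₊ : ℝ≥0∞) ∂σ) := by
  obtain ⟨CA, hCA1, hCA⟩ := lowPass_bound d hd φ
  have hCA0 : (0 : ℝ) < CA := lt_of_lt_of_le one_pos hCA1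
  refine ⟨CA ^ m, pow_pos hCA0 m, ?_⟩
  intro f k x
  refine iSup₂_le fun t ht => ?_
  have hae : ∀ᵐ y ∂σ, ‖y‖ ≤ 1 := by
    rw [MeasureTheory.ae_iff]
    have hset : {y : EuclideanSpace ℝ (Fin m × Fin d) | ¬ ‖y‖ ≤ 1} = (closedBall 0 1)ᶜ := by
      ext y; simp [mem_closedBall, dist_zero_right]
    rw [hset]; exact hsupp
  set c : ℝ := (2 : ℝ) ^ (-k) * t with hc
  have hcpos : 0 < c := mul_pos (zpow_pos (by norm_num) _) (lt_trans one_pos ht.1)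
  set s : Finset (Fin m) := Finset.univ.filter (fun i : Fin m => (i : ℕ) < α) with hs
  set Q : ℝ≥0∞ := ENNReal.ofReal (CA ^ m) * ∏ i ∈ s, MHL (⇑(f i)) x with hQ
  have step1 : (‖∫ y, ∏ i : Fin m,
        (if (i : ℕ) < α then lowPass (⇑φ) k (⇑(f i)) (x - c • blk y i)
         else f i (x - c • blk y i)) ∂σ‖₊ : ℝ≥0∞)
      ≤ ∫⁻ y, ∏ i : Fin m,
          (‖if (i : ℕ) < α then lowPass (⇑φ) k (⇑(f i)) (x - c • blk y i)
            else f i (x - c • blk y i)‖₊ : ℝ≥0∞) ∂σ := by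
    refine (enorm_integral_le_lintegral_enorm _).trans
      (le_of_eq (lintegral_congr fun y => ?_))
    rw [enorm_eq_nnnorm, nnnorm_prod, ENNReal.coe_finset_prod]
  have hpt : ∀ᵐ y ∂σ, (∏ i : Fin m,
        (‖if (i : ℕ) < α then lowPass (⇑φ) k (⇑(f i)) (x - c • blk y i)
          else f i (x - c • blk y i)‖₊ : ℝ≥0∞))
      ≤ Q * ∏ i ∈ Finset.univ.filter (fun i : Fin m => α ≤ (i : ℕ)),
          (‖f i (x - c • blk y i)‖₊ : ℝ≥0∞) := by
    filter_upwards [hae] with y hy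
    rw [← Finset.prod_filter_mul_prod_filter_not Finset.univ (fun i : Fin m => (i : ℕ) < α)]
    refine mul_le_mul' ?_ ?_
    · have hlow : ∀ i ∈ s,
          (‖if (i : ℕ) < α then lowPass (⇑φ) k (⇑(f i)) (x - c • blk y i)
            else f i (x - c • blk y i)‖₊ : ℝ≥0∞)
          ≤ ENNReal.ofReal CA * MHL (⇑(f i)) x := by
        intro i hi
        have hiα : (i : ℕ) < α := (Finset.mem_filter.mp hi).2
        rw [if_pos hiα]
        refine hCA (f i) k x _ ?_
        have h1 : dist (x - c • blk y i) x = ‖c • blk y i‖ := by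
          rw [dist_eq_norm]
          simp
        rw [h1, norm_smul, Real.norm_eq_abs, abs_of_pos hcpos]
        have hblk : ‖blk y i‖ ≤ 1 := (norm_blk_le y i).trans hy
        calc c * ‖blk y i‖ ≤ c * 1 := mul_le_mul_of_nonneg_left hblk hcpos.le
          _ = (2 : ℝ) ^ (-k) * t := by rw [mul_one, hc]
          _ ≤ (2 : ℝ) ^ (-k) * 2 :=
              mul_le_mul_of_nonneg_left ht.2.le (le_of_lt (zpow_pos (by norm_num) _))
          _ = 2 * (2 : ℝ) ^ (-k) := mul_comm _ _
      calc (∏ i ∈ s, (‖if (i : ℕ) < α then lowPass (⇑φ) k (⇑(f i)) (x - c • blk y i)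
              else f i (x - c • blk y i)‖₊ : ℝ≥0∞))
          ≤ ∏ i ∈ s, (ENNReal.ofReal CA * MHL (⇑(f i)) x) := Finset.prod_le_prod' hlow
        _ = (ENNReal.ofReal CA) ^ s.card * ∏ i ∈ s, MHL (⇑(f i)) x := by
            rw [Finset.prod_mul_distrib, Finset.prod_const]
        _ ≤ Q := by
            rw [hQ]
            refine mul_le_mul_left ?_ _
            rw [ENNReal.ofReal_pow hCA0.le]
            refine pow_le_pow_right' (ENNReal.one_le_ofReal.mpr hCA1) ?_
            exact le_trans (Finset.card_filter_le _ _) (by simp)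
    · refine le_of_eq ?_
      rw [show Finset.univ.filter (fun i : Fin m => ¬ (i : ℕ) < α)
          = Finset.univ.filter (fun i : Fin m => α ≤ (i : ℕ)) from
        Finset.filter_congr fun i _ => by simp [not_lt]]
      refine Finset.prod_congr rfl fun i hi => ?_
      rw [if_neg (by simpa [not_lt] using (Finset.mem_filter.mp hi).2)]
  have hmeas : Measurable fun y : EuclideanSpace ℝ (Fin m × Fin d) =>
      ∏ i ∈ Finset.univ.filter (fun i : Fin m => α ≤ (i : ℕ)),
        (‖f i (x - c • blk y i)‖₊ : ℝ≥0∞) := by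
    refine Finset.measurable_prod _ fun i _ => ?_
    have hb : Continuous fun y : EuclideanSpace ℝ (Fin m × Fin d) => blk y i := by
      have h1 : Continuous fun (y : EuclideanSpace ℝ (Fin m × Fin d)) =>
          (fun a => y (i, a) : Fin d → ℝ) :=
        continuous_pi fun a => (EuclideanSpace.proj ((i, a) : Fin m × Fin d)).continuous
      exact (EuclideanSpace.equiv (Fin d) ℝ).symm.continuous.comp h1
    exact (((f i).continuous.comp (continuous_const.sub (hb.const_smul c))).measurable).enorm
  have step2 : ∫⁻ y, ∏ i : Fin m,
        (‖if (i : ℕ) < α then lowPass (⇑φ) k (⇑(f i)) (x - c • blk y i)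
          else f i (x - c • blk y i)‖₊ : ℝ≥0∞) ∂σ
      ≤ Q * ∫⁻ y, ∏ i ∈ Finset.univ.filter (fun i : Fin m => α ≤ (i : ℕ)),
          (‖f i (x - c • blk y i)‖₊ : ℝ≥0∞) ∂σ :=
    (lintegral_mono_ae hpt).trans (le_of_eq (lintegral_const_mul _ hmeas))
  have step3 : ∫⁻ y, ∏ i ∈ Finset.univ.filter (fun i : Fin m => α ≤ (i : ℕ)),
        (‖f i (x - c • blk y i)‖₊ : ℝ≥0∞) ∂σ
      ≤ ⨆ (k' : ℤ) (t' : ℝ) (_ : t' ∈ Set.Ioo (1 : ℝ) 2),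
        ∫⁻ y, ∏ i ∈ Finset.univ.filter (fun i : Fin m => α ≤ (i : ℕ)),
          (‖f i (x - ((2 : ℝ) ^ (-k') * t') • blk y i)‖₊ : ℝ≥0∞) ∂σ :=
    le_iSup_of_le k (le_iSup_of_le t (le_iSup_of_le ht le_rfl))
  exact step1.trans (step2.trans (mul_le_mul_right step3 Q))
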